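/- The sum v_P + v_D belongs to cl(dom f − dom g) ∩ cl(dom f* + dom g*); in particular this intersection is nonempty. -/

import Mathlib

open scoped InnerProductSpace Pointwise Classical
open Filter Topology

noncomputable section

variable {H : Type*} [NormedAddCommGroup H] [InnerProductSpace ℝ H]

/-- The effective domain of an extended-real-valued function. -/
def fdom {α : Type*} (f : α → EReal) : Set α := {x | f x ≠ ⊤}

/-- The Fenchel conjugate `f*(u) = sup_x (⟪x, u⟫ - f x)`. -/
def fconj (f : H → EReal) : H → EReal :=
  fun u => ⨆ x : H, ((⟪x, u⟫_ℝ : ℝ) : EReal) - f x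

/-- The recession function `(rec f)(y) = sup_{x ∈ dom f} (f (x + y) - f x)`. -/
def recFn (f : H → EReal) : H → EReal :=
  fun y => ⨆ x ∈ fdom f, (f (x + y) - f x)

/-- A proper function: never `-∞` and not identically `+∞`. -/
def ProperFn {α : Type*} (f : α → EReal) : Prop := (∀ x, f x ≠ ⊥) ∧ ∃ x, f x ≠ ⊤

/-- Convexity of an extended-real-valued function, via convexity of its epigraph. -/
def ConvexFn (f : H → EReal) : Prop :=
  Convex ℝ {p : H × ℝ | f p.1 ≤ (p.2 : EReal)}

/-- `v` is the element of minimum norm of `S`, i.e. `v = P_S 0`, the metric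
projection of `0` onto `S`. -/
def IsMinNormPoint (S : Set H) (v : H) : Prop := v ∈ S ∧ ∀ w ∈ S, ‖v‖ ≤ ‖w‖

/-- `p` is the metric projection of `x` onto `S`, i.e. `p = P_S x`. -/
def IsProjOn (S : Set H) (x p : H) : Prop := p ∈ S ∧ ∀ w ∈ S, dist x p ≤ dist x w

/-- The polar cone `S° = {u | ∀ x ∈ S, ⟪x, u⟫ ≤ 0}`. -/
def polarCone (s : Set H) : Set H := {u | ∀ x ∈ s, ⟪x, u⟫_ℝ ≤ 0}

/-- The recession cone `rec S = {x | ∀ y ∈ S, x + y ∈ S}`. -/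
def recCone (s : Set H) : Set H := {x | ∀ y ∈ s, x + y ∈ s}

/-- `p = prox_f w`: `p` minimizes `y ↦ f y + ½‖y - w‖²`. -/
def IsProxOf (f : H → EReal) (w p : H) : Prop :=
  ∀ y : H, f p + ((1 / 2 * ‖p - w‖ ^ 2 : ℝ) : EReal) ≤ f y + ((1 / 2 * ‖y - w‖ ^ 2 : ℝ) : EReal)

/-! If `u` is bounded above on `dom f - dom g`, then `-u` is bounded above on `dom g`, hence a
recession direction of `dom g*` and so of `cl (dom f* + dom g*)`; minimality of `v_D` then gives
`⟪u, v_D⟫ ≤ 0`. So `v_D` moves `v_P` into every closed half-space containing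
`cl (dom f - dom g)`, i.e. into that closed convex set. Symmetrically, a direction bounded above on
`dom g*` is a recession direction of `cl (dom g)` (the separation argument behind `g** = cl g`),
which gives `v_P + v_D ∈ cl (dom f* + dom g*)`. -/

lemma EReal.coe_sub_le_coe_iff {r c : ℝ} {y : EReal} :
    (r : EReal) - y ≤ c ↔ ((r - c : ℝ) : EReal) ≤ y := by
  induction y with
  | bot => simpa using EReal.coe_ne_bot (r - c)
  | top => simp
  | coe y => norm_cast; constructor <;> intro h <;> linarith

section RecCone

variable {E : Type*} [NormedAddCommGroup E] {s t : Set E}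

lemma mem_recCone_closure_of_forall {u : E} (h : ∀ x ∈ s, u + x ∈ closure s) :
    u ∈ recCone (closure s) :=
  fun _ hx => closure_minimal h (isClosed_closure.preimage (continuous_const_add u)) hx

lemma recCone_subset_recCone_closure : recCone s ⊆ recCone (closure s) :=
  fun _ hu => mem_recCone_closure_of_forall fun x hx => subset_closure (hu x hx)

lemma recCone_subset_recCone_add : recCone t ⊆ recCone (s + t) := by
  rintro u hu _ ⟨a, ha, b, hb, rfl⟩
  exact ⟨a, ha, u + b, hu b hb, add_left_comm a u b⟩

lemma neg_recCone_closure_subset : -recCone (closure t) ⊆ recCone (closure (s - t)) := by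
  refine fun u hu => mem_recCone_closure_of_forall ?_
  rintro _ ⟨a, ha, b, hb, rfl⟩
  have hab : a - (-u + b) ∈ closure (s - t) :=
    map_mem_closure₂ continuous_sub (subset_closure ha) (hu b (subset_closure hb))
      fun a ha b hb => Set.sub_mem_sub ha hb
  rwa [show a - (-u + b) = u + (a - b) by abel] at hab

end RecCone

section BarrierCone

variable {s t : Set H}

def barrierCone (s : Set H) : Set H := {u | BddAbove ((⟪·, u⟫_ℝ) '' s)}

lemma barrierCone_anti (h : s ⊆ t) : barrierCone t ⊆ barrierCone s :=
  fun _ hu => hu.mono (Set.image_mono h)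

lemma smul_mem_barrierCone {u : H} (hu : u ∈ barrierCone s) {r : ℝ} (hr : 0 ≤ r) :
    r • u ∈ barrierCone s := by
  obtain ⟨M, hM⟩ := hu
  refine ⟨r * M, Set.forall_mem_image.2 fun x hx => ?_⟩
  rw [real_inner_smul_right]
  exact mul_le_mul_of_nonneg_left (hM (Set.mem_image_of_mem _ hx)) hr

lemma barrierCone_sub_subset (hs : s.Nonempty) : barrierCone (s - t) ⊆ -barrierCone t := by
  rintro u ⟨M, hM⟩
  obtain ⟨a, ha⟩ := hs
  refine ⟨M - ⟪a, u⟫_ℝ, Set.forall_mem_image.2 fun y hy => ?_⟩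
  have := hM (Set.mem_image_of_mem _ (Set.sub_mem_sub ha hy))
  rw [inner_sub_left] at this
  rw [inner_neg_right]
  linarith

lemma barrierCone_add_subset (hs : s.Nonempty) : barrierCone (s + t) ⊆ barrierCone t := by
  rintro u ⟨M, hM⟩
  obtain ⟨a, ha⟩ := hs
  refine ⟨M - ⟪a, u⟫_ℝ, Set.forall_mem_image.2 fun y hy => ?_⟩
  have := hM (Set.mem_image_of_mem _ (Set.add_mem_add ha hy))
  rw [inner_add_left] at this
  linarith

lemma mem_polarCone_barrierCone {w : H} (hs : s.Nonempty)
    (hw : ∀ r : ℝ, 0 ≤ r → r • w ∈ recCone s) : w ∈ polarCone (barrierCone s) := by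
  rintro u ⟨M, hM⟩
  obtain ⟨a, ha⟩ := hs
  have hbound : ∀ r : ℝ, 0 ≤ r → r * ⟪w, u⟫_ℝ + ⟪a, u⟫_ℝ ≤ M := fun r hr => by
    have := hM (Set.mem_image_of_mem _ (hw r hr a ha))
    rwa [inner_add_left, real_inner_smul_left] at this
  rw [real_inner_comm]
  by_contra! hpos
  have := hbound ((|M - ⟪a, u⟫_ℝ| + 1) / ⟪w, u⟫_ℝ) (by positivity)
  rw [div_mul_cancel₀ _ hpos.ne'] at this
  linarith [le_abs_self (M - ⟪a, u⟫_ℝ)]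

lemma exists_inner_lt_of_notMem [CompleteSpace H] (hs : Convex ℝ s) (hsc : IsClosed s) {x : H}
    (hx : x ∉ s) : ∃ w : H, ∃ β : ℝ, (∀ z ∈ s, ⟪z, w⟫_ℝ < β) ∧ β < ⟪x, w⟫_ℝ := by
  obtain ⟨φ, β, hlt, hgt⟩ := geometric_hahn_banach_closed_point hs hsc hx
  have hφ : ∀ z, φ z = ⟪z, (InnerProductSpace.toDual ℝ H).symm φ⟫_ℝ := fun z => by
    rw [real_inner_comm, InnerProductSpace.toDual_symm_apply]
  exact ⟨_, β, fun z hz => hφ z ▸ hlt z hz, hφ x ▸ hgt⟩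

lemma inner_nonneg_of_isMinNormPoint {v u : H} (hv : IsMinNormPoint s v)
    (hu : ∀ r : ℝ, 0 ≤ r → r • u ∈ recCone s) : 0 ≤ ⟪v, u⟫_ℝ := by
  by_contra! hneg
  have hu0 : u ≠ 0 := by rintro rfl; simp at hneg
  have hu2 : 0 < ‖u‖ ^ 2 := by positivity
  -- the minimiser of `r ↦ ‖r • u + v‖` over the whole line
  set r := -⟪v, u⟫_ℝ / ‖u‖ ^ 2
  have hr : r * ‖u‖ ^ 2 = -⟪v, u⟫_ℝ := div_mul_cancel₀ _ hu2.ne'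
  have hle : ‖v‖ ≤ ‖r • u + v‖ := hv.2 _ (hu r (div_nonneg (by linarith) hu2.le) v hv.1)
  have hsq : ‖r • u + v‖ ^ 2 = ‖v‖ ^ 2 + 2 * (r * ⟪v, u⟫_ℝ) + r ^ 2 * ‖u‖ ^ 2 := by
    rw [norm_add_sq_real, real_inner_smul_left, norm_smul, real_inner_comm, mul_pow,
      Real.norm_eq_abs, sq_abs]
    ring
  nlinarith [pow_le_pow_left₀ (norm_nonneg v) hle 2]

lemma add_mem_of_isMinNormPoint [CompleteSpace H] (hs : Convex ℝ s) (hsc : IsClosed s)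
    {v d : H} (hv : v ∈ s) (hd : IsMinNormPoint t d) (hst : -barrierCone s ⊆ recCone t) :
    v + d ∈ s := by
  by_contra hvd
  obtain ⟨w, β, hlt, hgt⟩ := exists_inner_lt_of_notMem hs hsc hvd
  have hw : w ∈ barrierCone s := ⟨β, Set.forall_mem_image.2 fun z hz => (hlt z hz).le⟩
  have hdw : 0 ≤ ⟪d, -w⟫_ℝ := inner_nonneg_of_isMinNormPoint hd fun r hr =>
    hst (by rw [Set.mem_neg, smul_neg, neg_neg]; exact smul_mem_barrierCone hw hr)
  rw [inner_add_left] at hgt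
  rw [inner_neg_right] at hdw
  linarith [hlt v hv]

end BarrierCone

section Conjugate

variable {f : H → EReal}

lemma mem_fdom_fconj_iff {u : H} :
    u ∈ fdom (fconj f) ↔ ∃ c : ℝ, ∀ x, ((⟪x, u⟫_ℝ - c : ℝ) : EReal) ≤ f x := by
  constructor
  · intro hu
    refine ⟨(fconj f u).toReal, fun x => EReal.coe_sub_le_coe_iff.1 ?_⟩
    exact (le_iSup (fun x => ((⟪x, u⟫_ℝ : ℝ) : EReal) - f x) x).trans (EReal.le_coe_toReal hu)
  · rintro ⟨c, hc⟩
    have : fconj f u ≤ c := iSup_le fun x => EReal.coe_sub_le_coe_iff.2 (hc x)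
    exact (this.trans_lt (EReal.coe_lt_top c)).ne

lemma convex_fdom (hf : ConvexFn f) : Convex ℝ (fdom f) := by
  intro x hx y hy a b ha hb hab hxy
  have h := hf (x := (x, (f x).toReal)) (y := (y, (f y).toReal)) (EReal.le_coe_toReal hx)
    (EReal.le_coe_toReal hy) ha hb hab
  rw [Set.mem_ofPred_eq, Prod.fst_add, Prod.smul_fst, Prod.smul_fst, hxy, top_le_iff] at h
  exact EReal.coe_ne_top _ h

lemma convex_fdom_fconj (f : H → EReal) : Convex ℝ (fdom (fconj f)) := by
  intro u hu v hv a b ha hb hab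
  obtain ⟨c, hc⟩ := mem_fdom_fconj_iff.1 hu
  obtain ⟨d, hd⟩ := mem_fdom_fconj_iff.1 hv
  refine mem_fdom_fconj_iff.2 ⟨a * c + b * d, fun x => ?_⟩
  have hcomb : ⟪x, a • u + b • v⟫_ℝ - (a * c + b * d)
      = a • (⟪x, u⟫_ℝ - c) + b • (⟪x, v⟫_ℝ - d) := by
    rw [inner_add_right, real_inner_smul_right, real_inner_smul_right, smul_eq_mul, smul_eq_mul]
    ring
  rw [hcomb]
  refine (EReal.coe_le_coe_iff.2 (Convex.combo_le_max _ _ ha hb hab)).trans ?_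
  rcases max_choice (⟪x, u⟫_ℝ - c) (⟪x, v⟫_ℝ - d) with h | h <;> rw [h]
  exacts [hc x, hd x]

lemma barrierCone_fdom_subset_recCone_fdom_fconj :
    barrierCone (fdom f) ⊆ recCone (fdom (fconj f)) := by
  rintro u ⟨M, hM⟩ a ha
  obtain ⟨c, hc⟩ := mem_fdom_fconj_iff.1 ha
  refine mem_fdom_fconj_iff.2 ⟨M + c, fun x => ?_⟩
  by_cases hx : x ∈ fdom f
  · have hxu := hM (Set.mem_image_of_mem _ hx)
    refine le_trans ?_ (hc x)
    rw [EReal.coe_le_coe_iff, inner_add_right]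
    linarith
  · rw [show f x = ⊤ from not_not.1 hx]
    exact le_top

lemma barrierCone_fdom_fconj_subset_recCone_closure_fdom [CompleteSpace H] (hf : ConvexFn f)
    (hf' : (fdom (fconj f)).Nonempty) :
    barrierCone (fdom (fconj f)) ⊆ recCone (closure (fdom f)) := by
  intro u hu x hx
  by_contra hux
  obtain ⟨w, β, hlt, hgt⟩ :=
    exists_inner_lt_of_notMem (convex_fdom hf).closure isClosed_closure hux
  have hw : w ∈ barrierCone (fdom f) :=
    ⟨β, Set.forall_mem_image.2 fun z hz => (hlt z (subset_closure hz)).le⟩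
  have hwu : ⟪u, w⟫_ℝ ≤ 0 := mem_polarCone_barrierCone hf'
    (fun r hr => barrierCone_fdom_subset_recCone_fdom_fconj (smul_mem_barrierCone hw hr)) u hu
  rw [inner_add_left] at hgt
  linarith [hlt x hx]

end Conjugate

theorem vP_add_vD_mem_inter_general {H : Type*} [NormedAddCommGroup H] [InnerProductSpace ℝ H]
    [FiniteDimensional ℝ H]
    (f g : H → EReal)
    (hf_cvx : ConvexFn f)
    (hg_cvx : ConvexFn g)
    (vP : H) (hvP : IsMinNormPoint (closure (fdom f - fdom g)) vP)
    (vD : H) (hvD : IsMinNormPoint (closure (fdom (fconj f) + fdom (fconj g))) vD)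
    : vP + vD ∈ closure (fdom f - fdom g) ∩ closure (fdom (fconj f) + fdom (fconj g)) := by
  have hP : (fdom f - fdom g).Nonempty := closure_nonempty_iff.1 ⟨vP, hvP.1⟩
  have hD : (fdom (fconj f) + fdom (fconj g)).Nonempty := closure_nonempty_iff.1 ⟨vD, hvD.1⟩
  constructor
  · refine add_mem_of_isMinNormPoint ((convex_fdom hf_cvx).sub (convex_fdom hg_cvx)).closure
      isClosed_closure hvP.1 hvD fun w hw => ?_
    have hwg : w ∈ barrierCone (fdom g) := by
      simpa using barrierCone_sub_subset hP.of_sub_left (barrierCone_anti subset_closure hw)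
    exact recCone_subset_recCone_closure
      (recCone_subset_recCone_add (barrierCone_fdom_subset_recCone_fdom_fconj hwg))
  · rw [add_comm vP vD]
    refine add_mem_of_isMinNormPoint ((convex_fdom_fconj f).add (convex_fdom_fconj g)).closure
      isClosed_closure hvD.1 hvP fun w hw => neg_recCone_closure_subset ?_
    exact barrierCone_fdom_fconj_subset_recCone_closure_fdom hg_cvx hD.of_add_right
      (barrierCone_add_subset hD.of_add_left (barrierCone_anti subset_closure hw))

theorem vP_add_vD_mem_inter {H : Type*} [NormedAddCommGroup H] [InnerProductSpace ℝ H]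
    [FiniteDimensional ℝ H]
    (f g : H → EReal)
    (hf_prop : ProperFn f) (hf_lsc : LowerSemicontinuous f) (hf_cvx : ConvexFn f)
    (hg_prop : ProperFn g) (hg_lsc : LowerSemicontinuous g) (hg_cvx : ConvexFn g)
    (vP : H) (hvP : IsMinNormPoint (closure (fdom f - fdom g)) vP)
    (vD : H) (hvD : IsMinNormPoint (closure (fdom (fconj f) + fdom (fconj g))) vD)
    : vP + vD ∈ closure (fdom f - fdom g) ∩ closure (fdom (fconj f) + fdom (fconj g)) :=
  vP_add_vD_mem_inter_general f g hf_cvx hg_cvx vP hvP vD hvD
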